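/- The discrete Hadamard operator Q_n on ℓ²(V(Γ_n)), defined by (Q_n f)(x) = Σ_{y∈V(Γ_n)} K_{t(y)}(x,y) f(y), satisfies Q_n Q_n* = G̃_n, the normalized Green operator of Γ_n, with kernel G_n(x,y)/π(y). -/
import Mathlib


open scoped BigOperators
open MeasureTheory ProbabilityTheory

attribute [local instance] Classical.propDecidable

noncomputable section

/-- A connected, locally finite graph with a positive symmetric conductance. -/
structure WeightedGraph (V : Type) where
  adj : V → V → Prop
  symm : ∀ {x y}, adj x y → adj y x
  irrefl : ∀ x, ¬ adj x x
  locFin : ∀ x, {y | adj x y}.Finite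
  connected : ∀ x y, Relation.ReflTransGen adj x y
  c : V → V → ℝ
  c_pos : ∀ {x y}, adj x y → 0 < c x y
  c_symm : ∀ x y, c x y = c y x
  c_eq_zero : ∀ {x y}, ¬ adj x y → c x y = 0

variable {V : Type}

/-- Weighted coboundary operator: `(df)(x,y) = √c(x,y) (f x - f y)`. -/
noncomputable def dd (G : WeightedGraph V) (f : V → ℝ) : V × V → ℝ :=
  fun e => Real.sqrt (G.c e.1 e.2) * (f e.1 - f e.2)

/-- Weighted boundary operator: `(d*φ)(x) = Σ_{e : e⁻ = x} √c(e) φ(e)`. -/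
noncomputable def dstar (G : WeightedGraph V) (φ : V × V → ℝ) : V → ℝ :=
  fun x => ∑ᶠ y ∈ {y | G.adj x y}, Real.sqrt (G.c x y) * φ (x, y)

/-- The weighted graph Laplacian `d*d`. -/
noncomputable def lap (G : WeightedGraph V) (f : V → ℝ) : V → ℝ :=
  fun x => ∑ᶠ y ∈ {y | G.adj x y}, G.c x y * (f x - f y)

/-- Stationary distribution `π(x) = Σ_{y ∼ x} c(x,y)`. -/
noncomputable def piw (G : WeightedGraph V) (x : V) : ℝ :=
  ∑ᶠ y ∈ {y | G.adj x y}, G.c x y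

/-- `E_U`: edges with at least one endpoint in `U`. -/
def edgesOf (G : WeightedGraph V) (U : Set V) : Set (V × V) :=
  {e | G.adj e.1 e.2 ∧ (e.1 ∈ U ∨ e.2 ∈ U)}

/-- Dirichlet (energy) inner product `⟨f,g⟩_{∇,U} = (1/2) Σ_{e ∈ E_U} df(e) dg(e)`. -/
noncomputable def dirInner (G : WeightedGraph V) (U : Set V) (f g : V → ℝ) : ℝ :=
  (1/2) * ∑ᶠ e ∈ edgesOf G U, dd G f e * dd G g e

/-- `ℓ²(U)` inner product `⟨f,g⟩_U = Σ_{x ∈ U} f x * g x`. -/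
noncomputable def l2Inner (U : Set V) (f g : V → ℝ) : ℝ := ∑ᶠ x ∈ U, f x * g x

/-- Dirichlet Laplacian `Δ_U f = 1_U · d*d f`. -/
noncomputable def dirLap (G : WeightedGraph V) (U : Set V) (f : V → ℝ) : V → ℝ :=
  fun x => if x ∈ U then lap G f x else 0

/-- `GU` is the discrete Green function of `U`:
`d*d G_U(·,y) = π(y) δ_y` on `U`, vanishing off `U`, and `G_U(·,y) = 0` for `y ∉ U`. -/
def IsGreen (G : WeightedGraph V) (U : Set V) (GU : V → V → ℝ) : Prop :=
  (∀ y, y ∉ U → ∀ x, GU x y = 0) ∧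
  (∀ y ∈ U, (∀ x, x ∉ U → GU x y = 0) ∧
    ∀ x ∈ U, lap G (fun z => GU z y) x = piw G y * (if x = y then 1 else 0))

/-- `P` is the discrete Poisson kernel of `U` relative to `W ⊂ U`:
`P(·,ξ)` is harmonic on `U \ W`, equals `δ_ξ` on `W`, vanishes off `U`. -/
def IsPoisson (G : WeightedGraph V) (U W : Set V) (P : V → V → ℝ) : Prop :=
  ∀ ξ ∈ W, (∀ x ∈ U \ W, lap G (fun z => P z ξ) x = 0) ∧
    (∀ x ∈ W, P x ξ = (if x = ξ then 1 else 0)) ∧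
    (∀ x, x ∉ U → P x ξ = 0)

/-- A discrete foliation of the weighted graph `G`, given by its layers of vertices. -/
structure DiscreteFoliation (G : WeightedGraph V) where
  layer : ℕ → Set V
  layer_nonempty : ∀ n, (layer n).Nonempty
  layer_finite : ∀ n, (layer n).Finite
  layer_disjoint : ∀ m n, m ≠ n → Disjoint (layer m) (layer n)
  layer_cover : ∀ x, ∃ n, x ∈ layer n
  adj_zero : ∀ x ∈ layer 0, ∀ y, G.adj x y → y ∈ layer 0 ∪ layer 1
  adj_succ : ∀ n, ∀ x ∈ layer (n + 1), ∀ y, G.adj x y →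
    y ∈ layer n ∪ layer (n + 1) ∪ layer (n + 2)

/-- The growth cluster `Γ_n`: union of the layers `γ_0, …, γ_n`. -/
def cluster {G : WeightedGraph V} (F : DiscreteFoliation G) (n : ℕ) : Set V :=
  ⋃ k ≤ n, F.layer k

/-- `R m` is the symmetric positive semidefinite square-root kernel of the
boundary normalized Green operator `G̃^⟨m⟩` on `ℓ²(V(γ_m))`. -/
def IsSqrtBoundaryGreen {G : WeightedGraph V} (F : DiscreteFoliation G)
    (Gm : V → V → ℝ) (m : ℕ) (R : V → V → ℝ) : Prop :=
  (∀ x y, x ∈ F.layer m → y ∈ F.layer m → R x y = R y x) ∧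
  (∀ x y, x ∉ F.layer m ∨ y ∉ F.layer m → R x y = 0) ∧
  (∀ f : V → ℝ, Function.support f ⊆ F.layer m →
    0 ≤ ∑ᶠ x ∈ F.layer m, (∑ᶠ y ∈ F.layer m, R x y * f y) * f x) ∧
  (∀ x ∈ F.layer m, ∀ y ∈ F.layer m,
    ∑ᶠ σ ∈ F.layer m, R x σ * R σ y = Gm x y / piw G y)

/-- The Hadamard kernel `K_m(x,ξ) = Σ_{η ∈ γ_m} P_m(x,η) R̃_m(η,ξ)`. -/
noncomputable def hadK {G : WeightedGraph V} (F : DiscreteFoliation G)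
    (P R : ℕ → V → V → ℝ) (m : ℕ) (x ξ : V) : ℝ :=
  ∑ᶠ η ∈ F.layer m, P m x η * R m η ξ

/-- The Hadamard operator `Q_n f (x) = Σ_{y ∈ V(Γ_n)} K_{t(y)}(x,y) f(y)`. -/
noncomputable def hadQ {G : WeightedGraph V} (F : DiscreteFoliation G)
    (P R : ℕ → V → V → ℝ) (t : V → ℕ) (n : ℕ) (f : V → ℝ) : V → ℝ :=
  fun x => ∑ᶠ y ∈ cluster F n, hadK F P R (t y) x y * f y

/-- The adjoint Hadamard operator `Q_n* f (x) = Σ_{y ∈ V(Γ_n)} K_{t(x)}(y,x) f(y)`. -/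
noncomputable def hadQstar {G : WeightedGraph V} (F : DiscreteFoliation G)
    (P R : ℕ → V → V → ℝ) (t : V → ℕ) (n : ℕ) (f : V → ℝ) : V → ℝ :=
  fun x => ∑ᶠ y ∈ cluster F n, hadK F P R (t x) y x * f y

namespace HadamardAux
variable {V : Type}


lemma lap_eq_sum (G : WeightedGraph V) (f : V → ℝ) (x : V) :
    lap G f x = ∑ y ∈ (G.locFin x).toFinset, G.c x y * (f x - f y) := by
  rw [lap, finsum_mem_eq_finite_toFinset_sum _ (G.locFin x)]

lemma piw_eq_sum (G : WeightedGraph V) (x : V) :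
    piw G x = ∑ y ∈ (G.locFin x).toFinset, G.c x y := by
  rw [piw, finsum_mem_eq_finite_toFinset_sum _ (G.locFin x)]

lemma mem_cluster {G : WeightedGraph V} {F : DiscreteFoliation G} {n : ℕ} {x : V} :
    x ∈ cluster F n ↔ ∃ k ≤ n, x ∈ F.layer k := by
  simp [cluster]

lemma cluster_finite {G : WeightedGraph V} (F : DiscreteFoliation G) (n : ℕ) :
    (cluster F n).Finite := by
  have h : cluster F n = ⋃ k ∈ Set.Iic n, F.layer k := by
    ext v; simp [mem_cluster, Set.mem_iUnion]
  rw [h]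
  exact Set.Finite.biUnion (Set.finite_Iic n) (fun k _ => F.layer_finite k)

lemma layer_subset_cluster {G : WeightedGraph V} (F : DiscreteFoliation G) {k n : ℕ}
    (hk : k ≤ n) : F.layer k ⊆ cluster F n :=
  fun _ hx => mem_cluster.2 ⟨k, hk, hx⟩

lemma cluster_mono {G : WeightedGraph V} (F : DiscreteFoliation G) {m n : ℕ}
    (h : m ≤ n) : cluster F m ⊆ cluster F n := by
  intro v hv
  obtain ⟨k, hk, hvk⟩ := mem_cluster.1 hv
  exact mem_cluster.2 ⟨k, hk.trans h, hvk⟩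

lemma notMem_cluster {G : WeightedGraph V} (F : DiscreteFoliation G) {k m : ℕ}
    (hmk : m < k) {z : V} (hz : z ∈ F.layer k) : z ∉ cluster F m := by
  intro hc
  obtain ⟨j, hj, hzj⟩ := mem_cluster.1 hc
  exact Set.disjoint_left.1 (F.layer_disjoint k j (by omega)) hz hzj

lemma mem_cluster_succ {G : WeightedGraph V} (F : DiscreteFoliation G) {n : ℕ} {x : V} :
    x ∈ cluster F (n + 1) ↔ x ∈ cluster F n ∨ x ∈ F.layer (n + 1) := by
  simp only [mem_cluster]
  constructor
  · rintro ⟨k, hk, hx⟩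
    rcases Nat.lt_succ_iff_lt_or_eq.1 (Nat.lt_succ_of_le hk) with h | rfl
    · exact Or.inl ⟨k, Nat.lt_succ_iff.1 h, hx⟩
    · exact Or.inr hx
  · rintro (⟨k, hk, hx⟩ | hx)
    · exact ⟨k, hk.trans (Nat.le_succ n), hx⟩
    · exact ⟨n + 1, le_refl _, hx⟩

lemma layer_eq_of_t {G : WeightedGraph V} (F : DiscreteFoliation G) {t : V → ℕ}
    (ht : ∀ ξ, ξ ∈ F.layer (t ξ)) {m : ℕ} {y : V} (hy : y ∈ F.layer m) : t y = m := by
  by_contra h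
  exact Set.disjoint_left.1 (F.layer_disjoint (t y) m h) (ht y) hy

lemma exists_adj (G : WeightedGraph V) (F : DiscreteFoliation G) (x : V) :
    ∃ y, G.adj x y := by
  by_contra h
  push_neg at h
  have key : ∀ y, Relation.ReflTransGen G.adj x y → y = x := by
    intro y hy
    induction hy with
    | refl => rfl
    | tail hab hbc ih => rw [ih] at hbc; exact absurd hbc (h _)
  obtain ⟨a, ha⟩ := F.layer_nonempty 0
  obtain ⟨b, hb⟩ := F.layer_nonempty 1
  have ha' := key a (G.connected x a)
  have hb' := key b (G.connected x b)
  rw [ha'] at ha; rw [hb'] at hb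
  exact Set.disjoint_left.1 (F.layer_disjoint 0 1 (by omega)) ha hb

lemma piw_pos (G : WeightedGraph V) (F : DiscreteFoliation G) (x : V) :
    0 < piw G x := by
  rw [piw_eq_sum]
  obtain ⟨y, hy⟩ := exists_adj G F x
  exact Finset.sum_pos (fun z hz => G.c_pos (by simpa using hz)) ⟨y, by simpa using hy⟩

lemma lap_sub (G : WeightedGraph V) (f g : V → ℝ) (x : V) :
    lap G (fun z => f z - g z) x = lap G f x - lap G g x := by
  simp only [lap_eq_sum]
  rw [← Finset.sum_sub_distrib]
  exact Finset.sum_congr rfl fun y _ => by ring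

lemma lap_neg (G : WeightedGraph V) (f : V → ℝ) (x : V) :
    lap G (fun z => -f z) x = -lap G f x := by
  simp only [lap_eq_sum]
  rw [← Finset.sum_neg_distrib]
  exact Finset.sum_congr rfl fun y _ => by ring

lemma lap_sum (G : WeightedGraph V) {ι : Type} (A : Finset ι) (p : ι → V → ℝ) (x : V) :
    lap G (fun z => ∑ η ∈ A, p η z) x = ∑ η ∈ A, lap G (p η) x := by
  simp only [lap_eq_sum]
  have h : ∀ y ∈ (G.locFin x).toFinset,
      G.c x y * ((∑ η ∈ A, p η x) - ∑ η ∈ A, p η y)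
        = ∑ η ∈ A, G.c x y * (p η x - p η y) := by
    intro y _
    rw [← Finset.sum_sub_distrib, Finset.mul_sum]
  rw [Finset.sum_congr rfl h, Finset.sum_comm]


variable {V : Type}

lemma maxprin_le (G : WeightedGraph V) (U : Set V) (hU : U.Finite) (hne : ∃ z, z ∉ U)
    (h : V → ℝ) (h0 : ∀ x, x ∉ U → h x = 0) (hh : ∀ x ∈ U, lap G h x = 0) :
    ∀ x, h x ≤ 0 := by
  by_contra hc
  push_neg at hc
  obtain ⟨x₀, hx₀⟩ := hc
  have hx₀U : x₀ ∈ U := by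
    by_contra hx; rw [h0 x₀ hx] at hx₀; exact lt_irrefl 0 hx₀
  obtain ⟨m₀, hm₀U, hm₀⟩ :=
    hU.toFinset.exists_max_image h ⟨x₀, hU.mem_toFinset.2 hx₀U⟩
  set M := h m₀ with hM
  have hMpos : 0 < M := lt_of_lt_of_le hx₀ (hm₀ x₀ (hU.mem_toFinset.2 hx₀U))
  have hle : ∀ y, h y ≤ M := by
    intro y
    by_cases hy : y ∈ U
    · exact hm₀ y (hU.mem_toFinset.2 hy)
    · rw [h0 y hy]; exact hMpos.le
  have prop : ∀ w, h w = M → ∀ y, G.adj w y → h y = M := by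
    intro w hw y hy
    have hwU : w ∈ U := by
      by_contra hwU; rw [h0 w hwU] at hw; exact absurd hw.symm (ne_of_gt hMpos)
    have hlap := hh w hwU
    rw [lap_eq_sum] at hlap
    have hnn : ∀ z ∈ (G.locFin w).toFinset, 0 ≤ G.c w z * (h w - h z) := by
      intro z hz
      have hadj : G.adj w z := by simpa using hz
      have h1 := hle z
      have h2 := G.c_pos hadj
      nlinarith
    have hz0 := (Finset.sum_eq_zero_iff_of_nonneg hnn).1 hlap y (by simpa using hy)
    rcases mul_eq_zero.1 hz0 with h1 | h1
    · exact absurd h1 (ne_of_gt (G.c_pos hy))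
    · rw [hw] at h1; linarith
  have key : ∀ w, Relation.ReflTransGen G.adj m₀ w → h w = M := by
    intro w hw
    induction hw with
    | refl => rfl
    | tail hab hbc ih => exact prop _ ih _ hbc
  obtain ⟨z, hz⟩ := hne
  have hzM := key z (G.connected m₀ z)
  rw [h0 z hz] at hzM
  exact absurd hzM.symm (ne_of_gt hMpos)

lemma maxprin (G : WeightedGraph V) (U : Set V) (hU : U.Finite) (hne : ∃ z, z ∉ U)
    (h : V → ℝ) (h0 : ∀ x, x ∉ U → h x = 0) (hh : ∀ x ∈ U, lap G h x = 0) :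
    ∀ x, h x = 0 := by
  have h1 := maxprin_le G U hU hne h h0 hh
  have h2 := maxprin_le G U hU hne (fun z => -h z)
    (fun x hx => by show -h x = 0; rw [h0 x hx]; ring)
    (fun x hx => by rw [show (fun z => -h z) = fun z => -h z from rfl, lap_neg, hh x hx]; ring)
  intro x
  have := h1 x
  have := h2 x
  simp only [neg_nonpos] at *
  linarith [h2 x]

lemma green_symm (G : WeightedGraph V) (F : DiscreteFoliation G) (U : Set V)
    (hU : U.Finite) (GU : V → V → ℝ) (hG : IsGreen G U GU) :
    ∀ y ∈ U, ∀ z ∈ U, GU z y * piw G z = GU y z * piw G y := by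
  have key : ∀ a b : V → ℝ, (∀ v, v ∉ U → a v = 0) → (∀ v, v ∉ U → b v = 0) →
      ∑ v ∈ hU.toFinset, a v * lap G b v = ∑ v ∈ hU.toFinset, b v * lap G a v := by
    have expand : ∀ a b : V → ℝ, (∀ v, v ∉ U → b v = 0) →
        ∑ v ∈ hU.toFinset, a v * lap G b v =
          (∑ v ∈ hU.toFinset, piw G v * a v * b v)
            - ∑ v ∈ hU.toFinset, ∑ w ∈ hU.toFinset, G.c v w * a v * b w := by
      intro a b hb
      rw [← Finset.sum_sub_distrib]
      apply Finset.sum_congr rfl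
      intro v _
      have e2 : ∑ w ∈ (G.locFin v).toFinset, G.c v w * a v * b w
          = ∑ w ∈ hU.toFinset, G.c v w * a v * b w := by
        rw [← Finset.sum_subset (Finset.inter_subset_left :
              (G.locFin v).toFinset ∩ hU.toFinset ⊆ (G.locFin v).toFinset)
            (fun w hw hw' => by
              have : w ∉ U := fun hU' => hw' (Finset.mem_inter.2 ⟨hw, hU.mem_toFinset.2 hU'⟩)
              rw [hb w this]; ring),
          Finset.sum_subset (Finset.inter_subset_right :
              (G.locFin v).toFinset ∩ hU.toFinset ⊆ hU.toFinset)
            (fun w hw hw' => by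
              have : ¬ G.adj v w := fun ha =>
                hw' (Finset.mem_inter.2 ⟨(G.locFin v).mem_toFinset.2 ha, hw⟩)
              rw [G.c_eq_zero this]; ring)]
      rw [lap_eq_sum, piw_eq_sum, ← e2, Finset.mul_sum]
      simp only [Finset.sum_mul]
      rw [← Finset.sum_sub_distrib]
      exact Finset.sum_congr rfl fun w _ => by ring
    intro a b ha hb
    rw [expand a b hb, expand b a ha]
    congr 1
    · exact Finset.sum_congr rfl fun v _ => by ring
    · rw [Finset.sum_comm]
      apply Finset.sum_congr rfl
      intro v _
      apply Finset.sum_congr rfl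
      intro w _
      rw [G.c_symm]
      ring
  intro y hy z hz
  have hky := key (fun v => GU v y) (fun v => GU v z)
    (fun v hv => (hG.2 y hy).1 v hv) (fun v hv => (hG.2 z hz).1 v hv)
  have e1 : ∑ v ∈ hU.toFinset, GU v y * lap G (fun w => GU w z) v = GU z y * piw G z := by
    have hc : ∀ v ∈ hU.toFinset, GU v y * lap G (fun w => GU w z) v
        = (if v = z then GU z y * piw G z else 0) := by
      intro v hv
      rw [(hG.2 z hz).2 v (hU.mem_toFinset.1 hv)]
      by_cases hvz : v = z
      · subst hvz; simp
      · simp [hvz]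
    rw [Finset.sum_congr rfl hc, Finset.sum_ite_eq' hU.toFinset z
      (fun _ => GU z y * piw G z), if_pos (hU.mem_toFinset.2 hz)]
  have e2 : ∑ v ∈ hU.toFinset, GU v z * lap G (fun w => GU w y) v = GU y z * piw G y := by
    have hc : ∀ v ∈ hU.toFinset, GU v z * lap G (fun w => GU w y) v
        = (if v = y then GU y z * piw G y else 0) := by
      intro v hv
      rw [(hG.2 y hy).2 v (hU.mem_toFinset.1 hv)]
      by_cases hvy : v = y
      · subst hvy; simp
      · simp [hvy]
    rw [Finset.sum_congr rfl hc, Finset.sum_ite_eq' hU.toFinset y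
      (fun _ => GU y z * piw G y), if_pos (hU.mem_toFinset.2 hy)]
  rw [← e1, ← e2]; exact hky

lemma green_symm_div (G : WeightedGraph V) (F : DiscreteFoliation G) (U : Set V)
    (hU : U.Finite) (GU : V → V → ℝ) (hG : IsGreen G U GU) {y z : V}
    (hy : y ∈ U) (hz : z ∈ U) :
    GU y z / piw G z = GU z y / piw G y := by
  have hs := green_symm G F U hU GU hG y hy z hz
  rw [div_eq_div_iff (ne_of_gt (piw_pos G F z)) (ne_of_gt (piw_pos G F y))]
  linarith

lemma lap_mul_const (G : WeightedGraph V) (f : V → ℝ) (a : ℝ) (x : V) :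
    lap G (fun z => f z * a) x = lap G f x * a := by
  simp only [lap_eq_sum]
  rw [Finset.sum_mul]
  exact Finset.sum_congr rfl fun y _ => by ring

lemma poisson_rep (G : WeightedGraph V) (F : DiscreteFoliation G)
    (GU : V → V → ℝ) (m : ℕ) (hG : IsGreen G (cluster F m) GU)
    (P : V → V → ℝ) (hP : IsPoisson G (cluster F m) (F.layer m) P)
    (y : V) (hy : y ∈ F.layer m) (x : V) :
    ∑ η ∈ (F.layer_finite m).toFinset, P x η * GU η y = GU x y := by
  classical
  set L := (F.layer_finite m).toFinset with hL
  have hmemL : ∀ {η : V}, η ∈ L → η ∈ F.layer m := fun hη =>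
    (F.layer_finite m).mem_toFinset.1 hη
  obtain ⟨y0, hy0⟩ := F.layer_nonempty m
  have hzero := maxprin G (cluster F m \ F.layer m)
    ((cluster_finite F m).subset Set.diff_subset)
    ⟨y0, fun hc => hc.2 hy0⟩
    (fun v => (∑ η ∈ L, P v η * GU η y) - GU v y)
    (by
      intro v hv
      show (∑ η ∈ L, P v η * GU η y) - GU v y = 0
      by_cases hvL : v ∈ F.layer m
      · have hδ : ∀ η ∈ L, P v η * GU η y = (if v = η then GU η y else 0) := by
          intro η hη
          rw [(hP η (hmemL hη)).2.1 v hvL]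
          by_cases hvη : v = η <;> simp [hvη]
        rw [Finset.sum_congr rfl hδ, Finset.sum_ite_eq L v (fun η => GU η y),
          if_pos ((F.layer_finite m).mem_toFinset.2 hvL)]
        ring
      · have hvC : v ∉ cluster F m := fun hc => hv ⟨hc, hvL⟩
        have h1 : ∀ η ∈ L, P v η * GU η y = 0 := fun η hη => by
          rw [(hP η (hmemL hη)).2.2 v hvC]; ring
        rw [Finset.sum_eq_zero h1, (hG.2 y (layer_subset_cluster F (le_refl m) hy)).1 v hvC]
        ring)
    (by
      intro v hv
      rw [lap_sub, lap_sum]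
      have h1 : ∀ η ∈ L, lap G (fun z => P z η * GU η y) v = 0 := by
        intro η hη
        rw [lap_mul_const, (hP η (hmemL hη)).1 v hv]
        ring
      have h2 : lap G (fun z => GU z y) v =
          piw G y * (if v = y then 1 else 0) :=
        (hG.2 y (layer_subset_cluster F (le_refl m) hy)).2 v hv.1
      rw [Finset.sum_eq_zero h1, h2, if_neg (fun hvy => hv.2 (by rw [hvy]; exact hy))]
      ring)
    x
  linarith [hzero]

lemma green_step (G : WeightedGraph V) (F : DiscreteFoliation G)
    (GU GU' : V → V → ℝ) (m : ℕ)
    (hG : IsGreen G (cluster F m) GU) (hG' : IsGreen G (cluster F (m + 1)) GU')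
    (P : V → V → ℝ) (hP : IsPoisson G (cluster F (m + 1)) (F.layer (m + 1)) P)
    (z : V) (hz : z ∈ cluster F m) (x : V) :
    ∑ η ∈ (F.layer_finite (m + 1)).toFinset, P x η * GU' η z = GU' x z - GU x z := by
  classical
  set L := (F.layer_finite (m + 1)).toFinset with hL
  have hmemL : ∀ {η : V}, η ∈ L → η ∈ F.layer (m + 1) := fun hη =>
    (F.layer_finite (m + 1)).mem_toFinset.1 hη
  obtain ⟨y0, hy0⟩ := F.layer_nonempty (m + 1)
  have hzC : z ∈ cluster F (m + 1) := cluster_mono F (Nat.le_succ m) hz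
  have hzero := maxprin G (cluster F m) (cluster_finite F m)
    ⟨y0, notMem_cluster F (Nat.lt_succ_self m) hy0⟩
    (fun v => (∑ η ∈ L, P v η * GU' η z) - (GU' v z - GU v z))
    (by
      intro v hv
      show (∑ η ∈ L, P v η * GU' η z) - (GU' v z - GU v z) = 0
      by_cases hvL : v ∈ F.layer (m + 1)
      · have hδ : ∀ η ∈ L, P v η * GU' η z = (if v = η then GU' η z else 0) := by
          intro η hη
          rw [(hP η (hmemL hη)).2.1 v hvL]
          by_cases hvη : v = η <;> simp [hvη]
        rw [Finset.sum_congr rfl hδ, Finset.sum_ite_eq L v (fun η => GU' η z),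
          if_pos ((F.layer_finite (m + 1)).mem_toFinset.2 hvL),
          (hG.2 z hz).1 v hv]
        ring
      · have hvC : v ∉ cluster F (m + 1) := fun hc =>
          (mem_cluster_succ F).1 hc |>.elim hv hvL
        have h1 : ∀ η ∈ L, P v η * GU' η z = 0 := fun η hη => by
          rw [(hP η (hmemL hη)).2.2 v hvC]; ring
        rw [Finset.sum_eq_zero h1, (hG'.2 z hzC).1 v hvC, (hG.2 z hz).1 v hv]
        ring)
    (by
      intro v hv
      have hvC' : v ∈ cluster F (m + 1) := cluster_mono F (Nat.le_succ m) hv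
      have hvL : v ∉ F.layer (m + 1) := fun hl =>
        notMem_cluster F (Nat.lt_succ_self m) hl hv
      rw [lap_sub, lap_sub, lap_sum]
      have h1 : ∀ η ∈ L, lap G (fun w => P w η * GU' η z) v = 0 := by
        intro η hη
        rw [lap_mul_const, (hP η (hmemL hη)).1 v ⟨hvC', hvL⟩]
        ring
      rw [Finset.sum_eq_zero h1, (hG'.2 z hzC).2 v hvC', (hG.2 z hz).2 v hv]
      ring)
    x
  linarith [hzero]
noncomputable def DD (G : WeightedGraph V) (F : DiscreteFoliation G)
    (Gm : ℕ → V → V → ℝ) (P : ℕ → V → V → ℝ) (m : ℕ) (x z : V) : ℝ :=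
  ∑ η ∈ (F.layer_finite m).toFinset, ∑ η' ∈ (F.layer_finite m).toFinset,
    P m x η * P m z η' * (Gm m η η' / piw G η')

lemma DD_eq_zero (G : WeightedGraph V) (F : DiscreteFoliation G)
    (Gm : ℕ → V → V → ℝ) (P : ℕ → V → V → ℝ)
    (hP : ∀ m, IsPoisson G (cluster F m) (F.layer m) (P m))
    (m : ℕ) (x z : V) (hz : z ∉ cluster F m) :
    DD G F Gm P m x z = 0 := by
  apply Finset.sum_eq_zero
  intro η _
  apply Finset.sum_eq_zero
  intro η' hη'
  rw [(hP m η' ((F.layer_finite m).mem_toFinset.1 hη')).2.2 z hz]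
  ring

lemma DD_eq_layer (G : WeightedGraph V) (F : DiscreteFoliation G)
    (Gm : ℕ → V → V → ℝ) (hGm : ∀ m, IsGreen G (cluster F m) (Gm m))
    (P : ℕ → V → V → ℝ) (hP : ∀ m, IsPoisson G (cluster F m) (F.layer m) (P m))
    (m : ℕ) (x z : V) (hz : z ∈ F.layer m) :
    DD G F Gm P m x z = Gm m x z / piw G z := by
  classical
  set L := (F.layer_finite m).toFinset with hL
  have hmemL : ∀ {η : V}, η ∈ L → η ∈ F.layer m := fun hη =>
    (F.layer_finite m).mem_toFinset.1 hη
  have hinner : ∀ η ∈ L,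
      ∑ η' ∈ L, P m x η * P m z η' * (Gm m η η' / piw G η')
        = P m x η * Gm m η z / piw G z := by
    intro η hη
    have hδ : ∀ η' ∈ L, P m x η * P m z η' * (Gm m η η' / piw G η')
        = (if z = η' then P m x η * Gm m η η' / piw G η' else 0) := by
      intro η' hη'
      rw [(hP m η' (hmemL hη')).2.1 z hz]
      by_cases hzη : z = η' <;> simp [hzη]
      ring
    rw [Finset.sum_congr rfl hδ,
      Finset.sum_ite_eq L z (fun η' => P m x η * Gm m η η' / piw G η'),
      if_pos ((F.layer_finite m).mem_toFinset.2 hz)]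
  rw [DD, Finset.sum_congr rfl hinner]
  have : ∀ η ∈ L, P m x η * Gm m η z / piw G z = P m x η * Gm m η z * (piw G z)⁻¹ := by
    intro η _; rw [div_eq_mul_inv]
  rw [Finset.sum_congr rfl this, ← Finset.sum_mul,
    poisson_rep G F (Gm m) m (hGm m) (P m) (hP m) z hz x, ← div_eq_mul_inv]

lemma DD_succ (G : WeightedGraph V) (F : DiscreteFoliation G)
    (Gm : ℕ → V → V → ℝ) (hGm : ∀ m, IsGreen G (cluster F m) (Gm m))
    (P : ℕ → V → V → ℝ) (hP : ∀ m, IsPoisson G (cluster F m) (F.layer m) (P m))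
    (m : ℕ) (x z : V) (hz : z ∈ cluster F m) :
    DD G F Gm P (m + 1) x z = Gm (m + 1) x z / piw G z - Gm m x z / piw G z := by
  classical
  set L := (F.layer_finite (m + 1)).toFinset with hL
  have hmemL : ∀ {η : V}, η ∈ L → η ∈ F.layer (m + 1) := fun hη =>
    (F.layer_finite (m + 1)).mem_toFinset.1 hη
  have hmemC : ∀ {η : V}, η ∈ L → η ∈ cluster F (m + 1) := fun hη =>
    layer_subset_cluster F (le_refl _) (hmemL hη)
  have hzC : z ∈ cluster F (m + 1) := cluster_mono F (Nat.le_succ m) hz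
  have hinner : ∀ η ∈ L,
      ∑ η' ∈ L, P (m + 1) x η * P (m + 1) z η' * (Gm (m + 1) η η' / piw G η')
        = P (m + 1) x η * Gm (m + 1) η z / piw G z := by
    intro η hη
    have step1 : ∀ η' ∈ L,
        P (m + 1) x η * P (m + 1) z η' * (Gm (m + 1) η η' / piw G η')
          = P (m + 1) z η' * Gm (m + 1) η' η * (P (m + 1) x η * (piw G η)⁻¹) := by
      intro η' hη'
      rw [green_symm_div G F (cluster F (m + 1)) (cluster_finite F (m + 1))
        (Gm (m + 1)) (hGm (m + 1)) (hmemC hη) (hmemC hη'), div_eq_mul_inv]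
      ring
    rw [Finset.sum_congr rfl step1, ← Finset.sum_mul,
      poisson_rep G F (Gm (m + 1)) (m + 1) (hGm (m + 1)) (P (m + 1)) (hP (m + 1))
        η (hmemL hη) z,
      show Gm (m + 1) z η * (P (m + 1) x η * (piw G η)⁻¹)
          = P (m + 1) x η * (Gm (m + 1) z η / piw G η) by rw [div_eq_mul_inv]; ring,
      green_symm_div G F (cluster F (m + 1)) (cluster_finite F (m + 1))
        (Gm (m + 1)) (hGm (m + 1)) hzC (hmemC hη), div_eq_mul_inv, ← mul_assoc,
      ← div_eq_mul_inv]
  rw [DD, Finset.sum_congr rfl hinner]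
  have : ∀ η ∈ L, P (m + 1) x η * Gm (m + 1) η z / piw G z
      = P (m + 1) x η * Gm (m + 1) η z * (piw G z)⁻¹ := by
    intro η _; rw [div_eq_mul_inv]
  rw [Finset.sum_congr rfl this, ← Finset.sum_mul,
    green_step G F (Gm m) (Gm (m + 1)) m (hGm m) (hGm (m + 1)) (P (m + 1)) (hP (m + 1)) z hz x]
  rw [sub_mul, ← div_eq_mul_inv, ← div_eq_mul_inv]

lemma sum_DD (G : WeightedGraph V) (F : DiscreteFoliation G)
    (Gm : ℕ → V → V → ℝ) (hGm : ∀ m, IsGreen G (cluster F m) (Gm m))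
    (P : ℕ → V → V → ℝ) (hP : ∀ m, IsPoisson G (cluster F m) (F.layer m) (P m))
    (n k : ℕ) (hk : k ≤ n) (z : V) (hz : z ∈ F.layer k) (x : V) :
    ∑ m ∈ Finset.range (n + 1), DD G F Gm P m x z = Gm n x z / piw G z := by
  classical
  set w : ℕ → ℝ := fun m => if k < m then Gm (m - 1) x z / piw G z else 0 with hw
  have hD : ∀ m, DD G F Gm P m x z = w (m + 1) - w m := by
    intro m
    rcases lt_trichotomy m k with h | rfl | h
    · rw [DD_eq_zero G F Gm P hP m x z (notMem_cluster F h hz)]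
      simp only [hw]
      rw [if_neg (by omega), if_neg (by omega)]
      ring
    · rw [DD_eq_layer G F Gm hGm P hP m x z hz]
      simp only [hw]
      rw [if_pos (by omega), if_neg (by omega), Nat.add_sub_cancel]
      ring
    · obtain ⟨j, rfl⟩ : ∃ j, m = j + 1 := ⟨m - 1, by omega⟩
      have hzj : z ∈ cluster F j := layer_subset_cluster F (by omega) hz
      rw [DD_succ G F Gm hGm P hP j x z hzj]
      simp only [hw]
      rw [if_pos (by omega), if_pos (by omega), Nat.add_sub_cancel, Nat.add_sub_cancel]
  rw [Finset.sum_congr rfl (fun m _ => hD m), Finset.sum_range_sub w (n + 1)]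
  simp only [hw]
  rw [if_pos (by omega), if_neg (by omega), Nat.add_sub_cancel]
  ring
end HadamardAux
open HadamardAux in
/-- the Hadamard operator satisfies `Q_n Q_n* = G̃_n`, the normalized
Green operator of `Γ_n`, with kernel `G_n(x,y)/π(y)`. -/
theorem hadQ_mul_hadQstar (G : WeightedGraph V) (F : DiscreteFoliation G)
    (Gm : ℕ → V → V → ℝ) (hGm : ∀ m, IsGreen G (cluster F m) (Gm m))
    (P : ℕ → V → V → ℝ) (hP : ∀ m, IsPoisson G (cluster F m) (F.layer m) (P m))
    (R : ℕ → V → V → ℝ) (hR : ∀ m, IsSqrtBoundaryGreen F (Gm m) m (R m))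
    (t : V → ℕ) (ht : ∀ ξ, ξ ∈ F.layer (t ξ))
    (n : ℕ) (f : V → ℝ) (hf : Function.support f ⊆ cluster F n) (x : V) :
    hadQ F P R t n (hadQstar F P R t n f) x =
      ∑ᶠ y ∈ cluster F n, Gm n x y / piw G y * f y := by
  classical
  set Tn := (cluster_finite F n).toFinset with hTn
  have hK : ∀ m (a b : V), hadK F P R m a b
      = ∑ η ∈ (F.layer_finite m).toFinset, P m a η * R m η b := by
    intro m a b
    rw [hadK, finsum_mem_eq_finite_toFinset_sum _ (F.layer_finite m)]
  have hQs : ∀ w, hadQstar F P R t n f w = ∑ z ∈ Tn, hadK F P R (t w) z w * f z := by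
    intro w
    show (∑ᶠ y ∈ cluster F n, hadK F P R (t w) y w * f y) = _
    rw [finsum_mem_eq_finite_toFinset_sum _ (cluster_finite F n)]
  have step0 : hadQ F P R t n (hadQstar F P R t n f) x
      = ∑ w ∈ Tn, hadK F P R (t w) x w * ∑ z ∈ Tn, hadK F P R (t w) z w * f z := by
    show (∑ᶠ y ∈ cluster F n, hadK F P R (t y) x y * hadQstar F P R t n f y) = _
    rw [finsum_mem_eq_finite_toFinset_sum _ (cluster_finite F n)]
    exact Finset.sum_congr rfl fun w _ => by rw [hQs w]
  rw [step0]
  have step1 : ∑ w ∈ Tn, hadK F P R (t w) x w * ∑ z ∈ Tn, hadK F P R (t w) z w * f z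
      = ∑ z ∈ Tn, (∑ w ∈ Tn, hadK F P R (t w) x w * hadK F P R (t w) z w) * f z := by
    simp_rw [Finset.mul_sum]
    rw [Finset.sum_comm]
    apply Finset.sum_congr rfl
    intro z _
    rw [Finset.sum_mul]
    exact Finset.sum_congr rfl fun w _ => by ring
  rw [step1]
  have inner_eq : ∀ z ∈ Tn,
      ∑ w ∈ Tn, hadK F P R (t w) x w * hadK F P R (t w) z w = Gm n x z / piw G z := by
    intro z hzT
    have hzC := (cluster_finite F n).mem_toFinset.1 hzT
    obtain ⟨k, hk, hzk⟩ := mem_cluster.1 hzC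
    have hsplit : Tn = (Finset.range (n + 1)).biUnion
        (fun m => (F.layer_finite m).toFinset) := by
      ext v
      simp only [hTn, Set.Finite.mem_toFinset, Finset.mem_biUnion, Finset.mem_range,
        Nat.lt_succ_iff, mem_cluster]
    have hdisj : Set.PairwiseDisjoint ↑(Finset.range (n + 1))
        (fun m => (F.layer_finite m).toFinset) := by
      intro i _ j _ hij
      rw [Function.onFun, Finset.disjoint_left]
      intro a hai haj
      exact Set.disjoint_left.1 (F.layer_disjoint i j hij)
        ((F.layer_finite i).mem_toFinset.1 hai) ((F.layer_finite j).mem_toFinset.1 haj)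
    rw [hsplit, Finset.sum_biUnion hdisj]
    have hlayer : ∀ m ∈ Finset.range (n + 1),
        ∑ w ∈ (F.layer_finite m).toFinset, hadK F P R (t w) x w * hadK F P R (t w) z w
          = DD G F Gm P m x z := by
      intro m _
      rw [DD]
      have hterm : ∀ w ∈ (F.layer_finite m).toFinset,
          hadK F P R (t w) x w * hadK F P R (t w) z w
            = ∑ η ∈ (F.layer_finite m).toFinset, ∑ η' ∈ (F.layer_finite m).toFinset,
                P m x η * P m z η' * (R m η w * R m w η') := by
        intro w hw
        have hwL : w ∈ F.layer m := (F.layer_finite m).mem_toFinset.1 hw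
        have htw : t w = m := layer_eq_of_t F ht hwL
        rw [htw, hK, hK, Finset.sum_mul_sum]
        apply Finset.sum_congr rfl; intro η _
        apply Finset.sum_congr rfl; intro η' hη'
        rw [(hR m).1 η' w ((F.layer_finite m).mem_toFinset.1 hη') hwL]
        ring
      rw [Finset.sum_congr rfl hterm, Finset.sum_comm]
      apply Finset.sum_congr rfl
      intro η hη
      rw [Finset.sum_comm]
      apply Finset.sum_congr rfl
      intro η' hη'
      rw [← Finset.mul_sum]
      congr 1
      rw [← finsum_mem_eq_finite_toFinset_sum _ (F.layer_finite m)]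
      exact (hR m).2.2.2 η ((F.layer_finite m).mem_toFinset.1 hη) η'
        ((F.layer_finite m).mem_toFinset.1 hη')
    rw [Finset.sum_congr rfl hlayer]
    exact sum_DD G F Gm hGm P hP n k hk z hzk x
  rw [Finset.sum_congr rfl (fun z hz => by rw [inner_eq z hz]),
    finsum_mem_eq_finite_toFinset_sum _ (cluster_finite F n)]
end
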